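/- Let c > 0 and g : ℝ → ℝ be C¹ with g(0) = 0 and g'(0) = 0 (i.e., g(j) = o(|j|) near 0). Then j ≡ 0 is an isolated-in-amplitude solution in the following sense: there is no sequence of nonzero T-periodic solutions jₖ of j'' + c j + g(j) = 0 with period T < π/√c and sup|jₖ| → 0, sup|jₖ'| → 0. (Equivalently: any T-periodic solution with T < π/√c and sufficiently small C¹ norm is identically zero.) -/

import Mathlib

/-!
Near `0` the nonlinearity obeys `|g u| ≤ (c/2) |u|`, so a small solution satisfies
`|j'' + c j| ≤ (c/2) |j|`. Grönwall's inequality for `(j, j')` rules out double zeros of a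
nonzero solution, and a periodic solution of constant sign is concave or convex, so its
derivative is constant, `j'' = 0`, and then `j = 0`. So a nonzero periodic solution has a
positive and a negative nodal interval within one period. Sturm comparison with `sin (ω t)`,
where `ω² = 4c ≥ c + c/2`, makes each of them at least `π / (2√c)` long, forcing `T ≥ π / √c`.
-/

open Set Real Topology

lemma exists_abs_le_mul_abs_of_deriv_eq_zero {g : ℝ → ℝ} (hg : DifferentiableAt ℝ g 0)
    (hg0 : g 0 = 0) (hg'0 : deriv g 0 = 0) {δ : ℝ} (hδ : 0 < δ) :
    ∃ ε > 0, ∀ u, |u| ≤ ε → |g u| ≤ δ * |u| := by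
  have hlo : g =o[𝓝 0] fun u => u := by
    have hd : HasDerivAt g 0 0 := by simpa [hg'0] using hg.hasDerivAt
    simpa [hg0] using hasDerivAt_iff_isLittleO_nhds_zero.1 hd
  obtain ⟨ε, hε, hball⟩ := Metric.eventually_nhds_iff.1 (hlo.def hδ)
  refine ⟨ε / 2, half_pos hε, fun u hu => hball ?_⟩
  rw [Real.dist_0_eq_abs]
  linarith

lemma Function.Periodic.periodic_deriv {u : ℝ → ℝ} {T : ℝ} (hper : u.Periodic T) :
    (deriv u).Periodic T := fun t => by
  rw [← deriv_comp_add_const, hper.funext]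

lemma Function.Periodic.eq_of_antitone {f : ℝ → ℝ} {T : ℝ} (hper : f.Periodic T) (hT : 0 < T)
    (hf : Antitone f) (s t : ℝ) : f s = f t := by
  have hle : ∀ s t, f s ≤ f t := fun s t => by
    obtain ⟨y, hy, hfy⟩ := hper.exists_mem_Ico hT s t
    exact hfy ▸ hf hy.1
  exact le_antisymm (hle s t) (hle t s)

structure IsPosNodalInterval (u : ℝ → ℝ) (a b : ℝ) : Prop where
  lt : a < b
  left : u a = 0
  right : u b = 0
  pos : ∀ t ∈ Ioo a b, 0 < u t

namespace IsPosNodalInterval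

variable {u : ℝ → ℝ} {a b : ℝ}

lemma nonneg (h : IsPosNodalInterval u a b) {t : ℝ} (ht : t ∈ Icc a b) : 0 ≤ u t := by
  rcases ht.1.eq_or_lt with rfl | hat
  · exact h.left.ge
  rcases ht.2.eq_or_lt with rfl | htb
  · exact h.right.ge
  exact (h.pos t ⟨hat, htb⟩).le

lemma deriv_right_nonpos (h : IsPosNodalInterval u a b) : deriv u b ≤ 0 := by
  by_cases hu : DifferentiableAt ℝ u b
  swap
  · exact (deriv_zero_of_not_differentiableAt hu).le
  have hslope := hasDerivAt_iff_tendsto_slope.1 hu.hasDerivAt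
  have : (𝓝[Ioo a b] b).NeBot := right_nhdsWithin_Ioo_neBot h.lt
  have hle : 𝓝[Ioo a b] b ≤ 𝓝[≠] b := nhdsWithin_mono _ fun t (ht : t ∈ Ioo a b) => ht.2.ne
  refine le_of_tendsto (hslope.mono_left hle) ?_
  filter_upwards [self_mem_nhdsWithin] with t ht
  rw [slope_def_field, h.right, sub_zero]
  exact (div_neg_of_pos_of_neg (h.pos t ht) (sub_neg.2 ht.2)).le

end IsPosNodalInterval

lemma exists_zero_pos_Ioc {u : ℝ → ℝ} (hu : Continuous u) {p x : ℝ} (hpx : p < x)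
    (hp : u p ≤ 0) (hx : 0 < u x) :
    ∃ a, p ≤ a ∧ a < x ∧ u a = 0 ∧ ∀ t ∈ Ioc a x, 0 < u t := by
  obtain ⟨a, ⟨⟨hpa, hax⟩, ha⟩, hgreatest⟩ :=
    (isCompact_Icc.inter_right (isClosed_le hu continuous_const)).exists_isGreatest
      (⟨p, ⟨le_rfl, hpx.le⟩, hp⟩ : (Icc p x ∩ {t | u t ≤ 0}).Nonempty)
  have hpos : ∀ t ∈ Ioc a x, 0 < u t := fun t ht =>
    lt_of_not_ge fun hut => (hgreatest ⟨⟨hpa.trans ht.1.le, ht.2⟩, hut⟩).not_gt ht.1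
  have hax : a < x := hax.lt_of_ne fun hax => (hax ▸ hx).not_ge ha
  refine ⟨a, hpa, hax, ha.antisymm (not_lt.1 fun hneg => ?_), hpos⟩
  obtain ⟨z, hz, hz0⟩ := intermediate_value_Ioo hax.le hu.continuousOn ⟨hneg, hx⟩
  exact (hpos z ⟨hz.1, hz.2.le⟩).ne' hz0

lemma exists_zero_pos_Ico {u : ℝ → ℝ} (hu : Continuous u) {x q : ℝ} (hxq : x < q)
    (hx : 0 < u x) (hq : u q ≤ 0) :
    ∃ b, x < b ∧ b ≤ q ∧ u b = 0 ∧ ∀ t ∈ Ico x b, 0 < u t := by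
  obtain ⟨a, hqa, hax, ha, hpos⟩ := exists_zero_pos_Ioc (u := fun t => u (-t))
    (hu.comp continuous_neg) (neg_lt_neg hxq) (by simpa using hq) (by simpa using hx)
  refine ⟨-a, lt_neg_of_lt_neg hax, neg_le.1 hqa, by simpa using ha, fun t ht => ?_⟩
  simpa using hpos (-t) ⟨lt_neg.1 ht.2, neg_le_neg ht.1⟩

lemma exists_posNodalInterval {u : ℝ → ℝ} (hu : Continuous u) {p x q : ℝ} (hpx : p < x)
    (hxq : x < q) (hp : u p ≤ 0) (hx : 0 < u x) (hq : u q ≤ 0) :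
    ∃ a b, p ≤ a ∧ b ≤ q ∧ IsPosNodalInterval u a b := by
  obtain ⟨a, hpa, hax, ha, hposa⟩ := exists_zero_pos_Ioc hu hpx hp hx
  obtain ⟨b, hxb, hbq, hb, hposb⟩ := exists_zero_pos_Ico hu hxq hx hq
  refine ⟨a, b, hpa, hbq, ⟨hax.trans hxb, ha, hb, fun t ht => ?_⟩⟩
  rcases le_total t x with htx | hxt
  · exact hposa t ⟨ht.1, htx⟩
  · exact hposb t ⟨hxt, ht.2⟩

lemma Function.Periodic.exists_posNodalInterval_neg {u : ℝ → ℝ} {T : ℝ} (hper : u.Periodic T)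
    (hT : 0 < T) (hu : Continuous u) {tp tn : ℝ} (hp : 0 < u tp) (hn : u tn < 0) :
    ∃ a₁ b₁ a₂ b₂, IsPosNodalInterval u a₁ b₁ ∧ IsPosNodalInterval (-u) a₂ b₂ ∧
      b₁ - a₁ + (b₂ - a₂) ≤ T := by
  obtain ⟨s, ⟨htps, hsT⟩, hs⟩ := hper.exists_mem_Ico hT tn tp
  have hns : u s < 0 := hs ▸ hn
  have htps : tp < s := htps.lt_of_ne fun h => (h ▸ hp).not_gt hns
  obtain ⟨a₁, b₁, ha₁, hb₁, h₁⟩ := exists_posNodalInterval hu (by linarith : s - T < tp)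
    htps (by rw [hper.sub_eq]; exact hns.le) hp hns.le
  -- Looking for the negative interval inside `[b₁, a₁ + T]` keeps the two disjoint mod `T`.
  have hb₁s : b₁ < s := hb₁.lt_of_ne fun h => (h ▸ hns).ne h₁.right
  have hsa₁ : s < a₁ + T := by
    refine lt_of_le_of_ne (by linarith) fun h => hns.ne ?_
    rw [h, hper, h₁.left]
  obtain ⟨a₂, b₂, ha₂, hb₂, h₂⟩ := exists_posNodalInterval hu.neg hb₁s hsa₁
    (by simp [h₁.right]) (by simpa using hns) (by simp [hper a₁, h₁.left])
  exact ⟨a₁, b₁, a₂, b₂, h₁, h₂, by linarith⟩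

lemma eq_zero_of_abs_deriv_deriv_le {u : ℝ → ℝ} (hu : ContDiff ℝ 2 u) {K : ℝ}
    (hK : ∀ t, |deriv (deriv u) t| ≤ K * |u t|) {t₀ : ℝ} (h₀ : u t₀ = 0)
    (h₀' : deriv u t₀ = 0) {t : ℝ} (ht : t₀ ≤ t) : u t = 0 := by
  have hu' : ContDiff ℝ 1 (deriv u) := hu.deriv' (n := 1)
  have hderiv : ∀ s, HasDerivAt (fun s => (u s, deriv u s)) (deriv u s, deriv (deriv u) s) s :=
    fun s => ((hu.differentiable (by norm_num) s).hasDerivAt).prodMk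
      (hu'.differentiable one_ne_zero s).hasDerivAt
  have hzero := eq_zero_of_abs_deriv_le_mul_abs_self_of_eq_zero_right (K := 1 + |K|)
    (hu.continuous.prodMk hu'.continuous).continuousOn
    (fun s _ => (hderiv s).hasDerivWithinAt) (by simp [h₀, h₀'])
    (fun s _ => ?_) t ⟨ht, le_rfl⟩
  · exact congrArg Prod.fst hzero
  have hfst : |u s| ≤ ‖(u s, deriv u s)‖ := le_max_left _ _
  have hsnd : |deriv u s| ≤ ‖(u s, deriv u s)‖ := le_max_right _ _
  have hK' : K * |u s| ≤ |K| * ‖(u s, deriv u s)‖ :=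
    (mul_le_mul_of_nonneg_right (le_abs_self K) (abs_nonneg _)).trans
      (mul_le_mul_of_nonneg_left hfst (abs_nonneg K))
  have hN := mul_nonneg (abs_nonneg K) (norm_nonneg (u s, deriv u s))
  refine max_le ?_ ?_
  · change |deriv u s| ≤ _
    linarith
  · change |deriv (deriv u) s| ≤ _
    linarith [hK s, hfst.trans' (abs_nonneg _)]

lemma Function.Periodic.eq_zero_of_abs_deriv_deriv_le {u : ℝ → ℝ} {T : ℝ} (hper : u.Periodic T)
    (hT : 0 < T) (hu : ContDiff ℝ 2 u) {K : ℝ} (hK : ∀ t, |deriv (deriv u) t| ≤ K * |u t|)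
    {t₀ : ℝ} (h₀ : u t₀ = 0) (h₀' : deriv u t₀ = 0) (t : ℝ) : u t = 0 := by
  obtain ⟨s, hs, hts⟩ := hper.exists_mem_Ico hT t t₀
  rw [hts]
  exact _root_.eq_zero_of_abs_deriv_deriv_le hu hK h₀ h₀' hs.1

lemma sturm_deriv_right_nonneg {u : ℝ → ℝ} (hu : ContDiff ℝ 2 u) {ω a b : ℝ} (hω : 0 < ω)
    (hab : a < b) (hlen : b - a < π / ω) (ha : u a = 0) (hb : u b = 0)
    (hcmp : ∀ t ∈ Icc a b, 0 ≤ deriv (deriv u) t + ω ^ 2 * u t) : 0 ≤ deriv u b := by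
  have hu' : ContDiff ℝ 1 (deriv u) := hu.deriv' (n := 1)
  set θ : ℝ → ℝ := fun t => ω * (t - a)
  have hθ : ∀ t, HasDerivAt θ ω t := fun t => by
    simpa using ((hasDerivAt_id t).sub_const a).const_mul ω
  have hθb : θ b < π := (lt_div_iff₀' hω).1 hlen
  have hθ_mem : ∀ t ∈ Icc a b, θ t ∈ Icc 0 π := fun t ht =>
    ⟨mul_nonneg hω.le (by linarith [ht.1]),
      (mul_le_mul_of_nonneg_left (by linarith [ht.2]) hω.le).trans hθb.le⟩
  -- The Wronskian of `u` with `sin θ`, a solution of `w'' + ω² w = 0` vanishing at `a`.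
  set W : ℝ → ℝ := fun t => deriv u t * sin (θ t) - u t * (ω * cos (θ t))
  have hW : ∀ t, HasDerivAt W (sin (θ t) * (deriv (deriv u) t + ω ^ 2 * u t)) t := fun t => by
    have := ((hu'.differentiable one_ne_zero t).hasDerivAt.mul (hθ t).sin).sub
      ((hu.differentiable (by norm_num) t).hasDerivAt.mul (((hθ t).cos).const_mul ω))
    exact this.congr_deriv (by ring)
  have hmono : MonotoneOn W (Icc a b) := by
    refine monotoneOn_of_deriv_nonneg (convex_Icc a b)
      (fun t _ => (hW t).continuousAt.continuousWithinAt)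
      (fun t _ => (hW t).differentiableAt.differentiableWithinAt) fun t ht => ?_
    rw [interior_Icc] at ht
    rw [(hW t).deriv]
    have ht' := Ioo_subset_Icc_self ht
    exact mul_nonneg (sin_nonneg_of_nonneg_of_le_pi (hθ_mem t ht').1 (hθ_mem t ht').2)
      (hcmp t ht')
  have hWab := hmono (left_mem_Icc.2 hab.le) (right_mem_Icc.2 hab.le) hab.le
  have hsin : 0 < sin (θ b) := sin_pos_of_pos_of_lt_pi (mul_pos hω (by linarith)) hθb
  simp only [W, θ, ha, hb, sub_self, mul_zero, sin_zero, zero_mul, sub_zero] at hWab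
  exact nonneg_of_mul_nonneg_left hWab hsin

section NearlyLinear

variable {c δ : ℝ} {u : ℝ → ℝ}

lemma abs_deriv_deriv_neg_add_le (hlin : ∀ t, |deriv (deriv u) t + c * u t| ≤ δ * |u t|)
    (t : ℝ) : |deriv (deriv (-u)) t + c * (-u) t| ≤ δ * |(-u) t| := by
  have hneg : deriv (deriv (-u)) t = -deriv (deriv u) t := by
    rw [show deriv (-u) = -deriv u from funext fun _ => deriv.neg, deriv.neg]
  rw [hneg, Pi.neg_apply, mul_neg, ← neg_add, abs_neg, abs_neg]
  exact hlin t

lemma abs_deriv_deriv_le_of_abs_add_le (hlin : ∀ t, |deriv (deriv u) t + c * u t| ≤ δ * |u t|)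
    (t : ℝ) : |deriv (deriv u) t| ≤ (δ + |c|) * |u t| := by
  calc |deriv (deriv u) t| ≤ |deriv (deriv u) t + c * u t| + |c * u t| := by
        simpa using abs_sub (deriv (deriv u) t + c * u t) (c * u t)
    _ ≤ (δ + |c|) * |u t| := by rw [abs_mul]; linarith [hlin t]

variable {T : ℝ}

lemma Function.Periodic.eq_zero_of_nonneg (hper : u.Periodic T) (hT : 0 < T)
    (hu : ContDiff ℝ 2 u) (hlin : ∀ t, |deriv (deriv u) t + c * u t| ≤ δ * |u t|)
    (hδc : δ < c) (hnn : ∀ t, 0 ≤ u t) (t : ℝ) : u t = 0 := by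
  have hconcave : ∀ s, deriv (deriv u) s ≤ 0 := fun s => by
    have := (abs_le.1 (hlin s)).2
    rw [abs_of_nonneg (hnn s)] at this
    nlinarith [hnn s]
  have hderiv_const : ∀ s, deriv u s = deriv u 0 := fun s =>
    hper.periodic_deriv.eq_of_antitone hT
      (antitone_of_deriv_nonpos ((hu.deriv' (n := 1)).differentiable one_ne_zero) hconcave) s 0
  have hderiv2 : deriv (deriv u) t = 0 := by
    rw [funext hderiv_const, deriv_const]
  have := (abs_le.1 (hlin t)).2
  rw [hderiv2, zero_add, abs_of_nonneg (hnn t)] at this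
  nlinarith [hnn t, le_abs_self (c * u t)]

lemma IsPosNodalInterval.pi_div_le {a b ω : ℝ} (h : IsPosNodalInterval u a b)
    (hu : ContDiff ℝ 2 u) (hlin : ∀ t, |deriv (deriv u) t + c * u t| ≤ δ * |u t|)
    (hω : 0 < ω) (hcδ : c + δ ≤ ω ^ 2) (hsimple : deriv u b ≠ 0) : π / ω ≤ b - a := by
  refine le_of_not_gt fun hlen => hsimple (le_antisymm h.deriv_right_nonpos ?_)
  refine sturm_deriv_right_nonneg hu hω h.lt hlen h.left h.right fun t ht => ?_
  have hut := h.nonneg ht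
  have := (abs_le.1 (hlin t)).1
  rw [abs_of_nonneg hut] at this
  nlinarith

lemma Function.Periodic.eq_zero_of_lt_two_pi_div (hper : u.Periodic T) (hT : 0 < T)
    (hu : ContDiff ℝ 2 u) (hlin : ∀ t, |deriv (deriv u) t + c * u t| ≤ δ * |u t|)
    (hδc : δ < c) {ω : ℝ} (hω : 0 < ω) (hcδ : c + δ ≤ ω ^ 2) (hTω : T < 2 * π / ω)
    (t : ℝ) : u t = 0 := by
  by_contra hne
  have hsimple : ∀ s, u s = 0 → deriv u s ≠ 0 := fun s hs hs' =>
    hne <| hper.eq_zero_of_abs_deriv_deriv_le hT hu (abs_deriv_deriv_le_of_abs_add_le hlin)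
      hs hs' t
  obtain ⟨tp, htp⟩ : ∃ s, 0 < u s := by
    by_contra! h
    have hper' : (-u).Periodic T := hper.comp Neg.neg
    exact hne (neg_eq_zero.1 (hper'.eq_zero_of_nonneg hT hu.neg
      (abs_deriv_deriv_neg_add_le hlin) hδc (fun s => neg_nonneg.2 (h s)) t))
  obtain ⟨tn, htn⟩ : ∃ s, u s < 0 := by
    by_contra! h
    exact hne (hper.eq_zero_of_nonneg hT hu hlin hδc h t)
  obtain ⟨a₁, b₁, a₂, b₂, h₁, h₂, hsum⟩ :=
    hper.exists_posNodalInterval_neg hT hu.continuous htp htn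
  have hlen₁ := h₁.pi_div_le hu hlin hω hcδ (hsimple b₁ h₁.right)
  have hlen₂ := h₂.pi_div_le hu.neg (abs_deriv_deriv_neg_add_le hlin) hω hcδ <| by
    rw [deriv.neg, neg_ne_zero]
    exact hsimple b₂ (neg_eq_zero.1 h₂.right)
  rw [mul_div_assoc] at hTω
  linarith

end NearlyLinear

theorem stmt_10 (c : ℝ) (hc : 0 < c) (g : ℝ → ℝ) (hg : ContDiff ℝ 1 g)
    (hg0 : g 0 = 0) (hg'0 : deriv g 0 = 0) :
    ∃ ε > 0, ∀ (j : ℝ → ℝ) (T : ℝ), ContDiff ℝ 2 j →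
      (∀ t : ℝ, deriv (deriv j) t + c * j t + g (j t) = 0) →
      0 < T → T < Real.pi / Real.sqrt c → Function.Periodic j T →
      (∀ t : ℝ, |j t| ≤ ε ∧ |deriv j t| ≤ ε) →
      ∀ t : ℝ, j t = 0 := by
  obtain ⟨ε, hε, hgε⟩ := exists_abs_le_mul_abs_of_deriv_eq_zero
    (hg.differentiable one_ne_zero 0) hg0 hg'0 (half_pos hc)
  refine ⟨ε, hε, fun j T hj hode hT hTc hper hbound => ?_⟩
  have hlin : ∀ t, |deriv (deriv j) t + c * j t| ≤ c / 2 * |j t| := fun t => by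
    rw [eq_neg_of_add_eq_zero_left (hode t), abs_neg]
    exact hgε (j t) (hbound t).1
  refine hper.eq_zero_of_lt_two_pi_div hT hj hlin (half_lt_self hc)
    (mul_pos two_pos (sqrt_pos.2 hc))
    (by rw [mul_pow, sq_sqrt hc.le]; linarith) ?_
  rwa [mul_div_mul_left _ _ two_ne_zero]
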